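/- Conformal pullback identity on the multimomentum bundle (coordinate form). On Λ^m_2E = ℝ^m × ℝ^N × ℝ × ℝ^{mN} with coordinates (x^i, u^α, p, p^i_α), let Θ_2 = p d_mx + p^i_α du^α∧(∂_i⌟d_mx), let ϑ = ϑ_i(x)dx^i be a closed 1-form on ℝ^m with pullback θ to Λ^m_2E, and set Ω_{2,θ} = −dΘ_2 + θ∧Θ_2. Let γ̄ be the section of Λ^m_2E → E given by smooth functions ρ(x,u), γ^i_α(x,u), identified with the m-form γ̄ = ρ d_mx + γ^i_α du^α∧(∂_i⌟d_mx) on E. Then γ̄*θ = ϑ and γ̄*Ω_{2,θ} = −dγ̄ + ϑ∧γ̄ = −d_ϑγ̄. Consequently, γ̄*Ω_{2,θ} vanishes identically (equivalently, the image of γ̄ is a Lagrangian submanifold of the locally conformal multisymplectic manifold (Λ^m_2E, Ω_{2,θ}, θ)) if and only if γ̄ is closed with respect to the Lichnerowicz differential, d_ϑγ̄ = dγ̄ − ϑ∧γ̄ = 0. -/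

import Mathlib

open scoped BigOperators

noncomputable section

/-- A raw `k`-cochain on `E`: a scalar function of a point and `k` tangent vectors.
Smooth differential `k`-forms are regarded as such cochains by evaluation. -/
abbrev Coch (E : Type) (k : ℕ) : Type := E → (Fin k → E) → ℝ

/-- The exterior derivative of a `k`-cochain:
`(dω)(x)(v₀,…,v_k) = ∑ⱼ (-1)ʲ ∂_{vⱼ}(y ↦ ω(y)(v₀,…,v̂ⱼ,…,v_k))(x)`. -/
noncomputable def extDer {E : Type} [NormedAddCommGroup E] [NormedSpace ℝ E] {k : ℕ}
    (ω : Coch E k) : Coch E (k + 1) := fun x v =>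
  ∑ j : Fin (k + 1),
    (-1 : ℝ) ^ (j : ℕ) * fderiv ℝ (fun y => ω y (v ∘ j.succAbove)) x (v j)

/-- Wedge product of a 1-cochain with a `k`-cochain. -/
def wedge1 {E : Type} {k : ℕ} (θ : Coch E 1) (ω : Coch E k) : Coch E (k + 1) := fun x v =>
  ∑ j : Fin (k + 1), (-1 : ℝ) ^ (j : ℕ) * θ x (fun _ => v j) * ω x (v ∘ j.succAbove)

/-- Interior product (contraction) of a cochain with a vector field. -/
def iotaV {E : Type} {k : ℕ} (X : E → E) (ω : Coch E (k + 1)) : Coch E k := fun x v =>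
  ω x (Fin.cons (X x) v)

/-- Pullback of a cochain along a (smooth) map. -/
noncomputable def pullC {E F : Type} [NormedAddCommGroup E] [NormedSpace ℝ E]
    [NormedAddCommGroup F] [NormedSpace ℝ F] {k : ℕ}
    (f : F → E) (ω : Coch E k) : Coch F k := fun x v =>
  ω (f x) fun a => fderiv ℝ f x (v a)

/-- The configuration bundle `E = ℝ^m × ℝ^N` with fibre coordinates `u^α`. -/
abbrev Eb (m N : ℕ) : Type := (Fin m → ℝ) × (Fin N → ℝ)

/-- The coordinate volume form `d_mx = dx¹∧⋯∧dx^m` on `E`. -/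
def dmxE (m N : ℕ) : Coch (Eb m N) m := fun _ v => Matrix.det (Matrix.of fun a b => (v b).1 a)

/-- The coordinate 1-form `du^α` on `E`. -/
def duE (m N : ℕ) (α : Fin N) : Coch (Eb m N) 1 := fun _ v => (v 0).2 α

/-- The coordinate vector `∂/∂xⁱ` on `E`. -/
def XdirE (m N : ℕ) (i : Fin m) : Eb m N := (Pi.single i 1, 0)

/-- The `m`-form `du^α ∧ (∂_i ⌟ d_mx) = -(∂_i ⌟ (du^α ∧ d_mx))` on `E`. -/
def duContrE (m N : ℕ) (α : Fin N) (i : Fin m) : Coch (Eb m N) m := fun e v =>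
  -(iotaV (fun _ => XdirE m N i) (wedge1 (duE m N α) (dmxE m N)) e v)

/-- The extended multimomentum bundle `Λ^m_2E = ℝ^m × ℝ^N × ℝ × ℝ^{mN}` in coordinates
`(xⁱ, u^α, p, pⁱ_α)`. -/
abbrev Lb (m N : ℕ) : Type := (Fin m → ℝ) × (Fin N → ℝ) × ℝ × (Fin m → Fin N → ℝ)

/-- The coordinate volume form `d_mx` on `Λ^m_2E`. -/
def dmxL (m N : ℕ) : Coch (Lb m N) m := fun _ v => Matrix.det (Matrix.of fun a b => (v b).1 a)

/-- The coordinate 1-form `du^α` on `Λ^m_2E`. -/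
def duL (m N : ℕ) (α : Fin N) : Coch (Lb m N) 1 := fun _ v => (v 0).2.1 α

/-- The coordinate vector `∂/∂xⁱ` on `Λ^m_2E`. -/
def XdirL (m N : ℕ) (i : Fin m) : Lb m N := (Pi.single i 1, 0, 0, 0)

/-- The `m`-form `du^α ∧ (∂_i ⌟ d_mx) = -(∂_i ⌟ (du^α ∧ d_mx))` on `Λ^m_2E`. -/
def duContrL (m N : ℕ) (α : Fin N) (i : Fin m) : Coch (Lb m N) m := fun q v =>
  -(iotaV (fun _ => XdirL m N i) (wedge1 (duL m N α) (dmxL m N)) q v)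

/-- The canonical `m`-form `Θ₂ = p d_mx + pⁱ_α du^α∧(∂_i⌟d_mx)` on `Λ^m_2E`. -/
def Theta2 (m N : ℕ) : Coch (Lb m N) m := fun q v =>
  q.2.2.1 * dmxL m N q v +
    ∑ i : Fin m, ∑ α : Fin N, q.2.2.2 i α * duContrL m N α i q v

/-- The pullback to `Λ^m_2E` of the 1-form `ϑ = ϑ_i(x) dxⁱ` on the base. -/
def thL (m N : ℕ) (ϑ : (Fin m → ℝ) → Fin m → ℝ) : Coch (Lb m N) 1 := fun q v =>
  ∑ i : Fin m, ϑ q.1 i * (v 0).1 i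

/-- The locally conformal multisymplectic `(m+1)`-form
`Ω_{2,θ} = −dΘ₂ + θ∧Θ₂` on `Λ^m_2E`. -/
noncomputable def Omega2Th (m N : ℕ) (ϑ : (Fin m → ℝ) → Fin m → ℝ) :
    Coch (Lb m N) (m + 1) := fun q v =>
  -(extDer (Theta2 m N) q v) + wedge1 (thL m N ϑ) (Theta2 m N) q v

/-- The pullback to `E` of the 1-form `ϑ = ϑ_i(x) dxⁱ` on the base. -/
def thE (m N : ℕ) (ϑ : (Fin m → ℝ) → Fin m → ℝ) : Coch (Eb m N) 1 := fun e v =>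
  ∑ i : Fin m, ϑ e.1 i * (v 0).1 i

/-! Apart from the fibre coordinates `p, pⁱ_α`, every coordinate form on `Λ^m_2E` is pulled
back from `E` along the bundle projection, which `γ̄` splits. So `Θ₂`, the pairing of the fibre
coordinates with these basic forms, pulls back to the pairing of `(ρ, γ)` with the same forms,
which is `γ̄`. The basic forms have constant coefficients, so `d` only differentiates the
coefficients and `dΘ₂` pulls back to `dγ̄` by the chain rule; `θ` is basic, so `θ∧Θ₂` pulls
back to `ϑ∧γ̄`. -/

section CoefficientCochains

variable {E F V : Type} [NormedAddCommGroup E] [NormedSpace ℝ E]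
  [NormedAddCommGroup F] [NormedSpace ℝ F] [NormedAddCommGroup V] [NormedSpace ℝ V] {k : ℕ}

def coeffCoch (α : (Fin k → E) → V →L[ℝ] ℝ) (c : E → V) : Coch E k := fun y w => α w (c y)

theorem extDer_coeffCoch (α : (Fin k → E) → V →L[ℝ] ℝ) {c : E → V} {x : E}
    (hc : DifferentiableAt ℝ c x) (v : Fin (k + 1) → E) :
    extDer (coeffCoch α c) x v =
      ∑ j : Fin (k + 1), (-1 : ℝ) ^ (j : ℕ) * α (v ∘ j.succAbove) (fderiv ℝ c x (v j)) := by
  refine Finset.sum_congr rfl fun j _ => ?_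
  rw [show (fun y => coeffCoch α c y (v ∘ j.succAbove)) = α (v ∘ j.succAbove) ∘ c from rfl,
    ((α _).hasFDerivAt.comp x hc.hasFDerivAt).fderiv]
  rfl

variable {f : F → E} {α : (Fin k → E) → V →L[ℝ] ℝ} {β : (Fin k → F) → V →L[ℝ] ℝ} {x : F}

theorem pullC_coeffCoch (c : E → V) (hαβ : ∀ w, α (fun a => fderiv ℝ f x (w a)) = β w)
    (v : Fin k → F) :
    pullC f (coeffCoch α c) x v = coeffCoch β (c ∘ f) x v := by
  simp only [pullC, coeffCoch, hαβ, Function.comp_apply]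

theorem pullC_extDer_coeffCoch {c : E → V} (hf : DifferentiableAt ℝ f x)
    (hc : DifferentiableAt ℝ c (f x)) (hαβ : ∀ w, α (fun a => fderiv ℝ f x (w a)) = β w)
    (v : Fin (k + 1) → F) :
    pullC f (extDer (coeffCoch α c)) x v = extDer (coeffCoch β (c ∘ f)) x v := by
  rw [pullC, extDer_coeffCoch α hc, extDer_coeffCoch β (hc.comp x hf), fderiv_comp x hc hf]
  refine Finset.sum_congr rfl fun j _ => ?_
  rw [← hαβ]
  rfl

theorem pullC_wedge1 (θ : Coch E 1) (ω : Coch E k) (v : Fin (k + 1) → F) :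
    pullC f (wedge1 θ ω) x v = wedge1 (pullC f θ) (pullC f ω) x v :=
  rfl

theorem apply_fderiv_of_leftInverse (p : E →L[ℝ] F) {s : F → E} (hs : ∀ y, p (s y) = y)
    (hsd : DifferentiableAt ℝ s x) (w : F) : p (fderiv ℝ s x w) = w := by
  have h := p.hasFDerivAt.comp x hsd.hasFDerivAt
  rw [show p ∘ s = id from funext hs] at h
  exact congrArg (· w) (h.unique (hasFDerivAt_id x))

end CoefficientCochains

section MultimomentumBundle

variable {m N : ℕ}

variable (m N) in
def bundleProj : Lb m N →L[ℝ] Eb m N :=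
  (ContinuousLinearMap.fst ℝ _ _).prod
    ((ContinuousLinearMap.fst ℝ _ _).comp (ContinuousLinearMap.snd ℝ _ _))

theorem dmxL_eq (q : Lb m N) (W : Fin m → Lb m N) :
    dmxL m N q W = dmxE m N (bundleProj m N q) (fun a => bundleProj m N (W a)) :=
  rfl

theorem duContrL_eq (α : Fin N) (i : Fin m) (q : Lb m N) (W : Fin m → Lb m N) :
    duContrL m N α i q W =
      duContrE m N α i (bundleProj m N q) (fun a => bundleProj m N (W a)) := by
  have hcons : (Fin.cons (XdirE m N i) (fun a => bundleProj m N (W a)) : Fin (m + 1) → _) =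
      bundleProj m N ∘ Fin.cons (XdirL m N i) W := by
    rw [Fin.comp_cons]; rfl
  simp only [duContrE, iotaV, hcons]
  rfl

theorem thL_eq (ϑ : (Fin m → ℝ) → Fin m → ℝ) (q : Lb m N) (W : Fin 1 → Lb m N) :
    thL m N ϑ q W = thE m N ϑ (bundleProj m N q) (fun a => bundleProj m N (W a)) :=
  rfl

variable (m N) in
/-- The forms `d_mx` and `du^α∧(∂_i⌟d_mx)` are constant, so they are evaluated at the origin. -/
def coeffPairing (w : Fin m → Eb m N) : ℝ × (Fin m → Fin N → ℝ) →L[ℝ] ℝ :=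
  dmxE m N 0 w • ContinuousLinearMap.fst ℝ ℝ _ +
    ∑ i : Fin m, ∑ α : Fin N, duContrE m N α i 0 w •
      ((ContinuousLinearMap.proj α).comp
        ((ContinuousLinearMap.proj i).comp (ContinuousLinearMap.snd ℝ ℝ _)))

theorem coeffPairing_apply (w : Fin m → Eb m N) (r : ℝ) (g : Fin m → Fin N → ℝ) (e : Eb m N) :
    coeffPairing m N w (r, g) =
      r * dmxE m N e w + ∑ i : Fin m, ∑ α : Fin N, g i α * duContrE m N α i e w := by
  simp only [coeffPairing, add_apply, FunLike.coe_sum, Finset.sum_apply, smul_apply,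
    ContinuousLinearMap.coe_comp, Function.comp_apply, ContinuousLinearMap.coe_fst',
    ContinuousLinearMap.coe_snd', ContinuousLinearMap.proj_apply, smul_eq_mul, mul_comm]
  rfl

theorem Theta2_eq_coeffCoch :
    Theta2 m N = coeffCoch (fun W => coeffPairing m N fun a => bundleProj m N (W a))
      (fun q => q.2.2) := by
  ext q W
  simp only [coeffCoch, coeffPairing_apply _ _ _ (bundleProj m N q), Theta2, dmxL_eq,
    duContrL_eq]

end MultimomentumBundle

theorem conformal_pullback_identity_general (m N : ℕ)
    (ϑ : (Fin m → ℝ) → Fin m → ℝ)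
    (ρ : Eb m N → ℝ) (hρ : ContDiff ℝ (⊤ : ℕ∞) ρ)
    (γ : Eb m N → Fin m → Fin N → ℝ) (hγ : ContDiff ℝ (⊤ : ℕ∞) γ)
    -- the section `γ̄ : E → Λ^m_2E`
    (gbar : Eb m N → Lb m N) (hgbar : ∀ e : Eb m N, gbar e = (e.1, e.2, ρ e, γ e))
    -- `γ̄` as an `m`-form on `E`
    (Gbar : Coch (Eb m N) m)
    (hGbar : ∀ (e : Eb m N) (v : Fin m → Eb m N),
      Gbar e v = ρ e * dmxE m N e v +
        ∑ i : Fin m, ∑ α : Fin N, γ e i α * duContrE m N α i e v) :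
    -- `γ̄*θ = ϑ`
    (∀ (e : Eb m N) (v : Fin 1 → Eb m N),
      pullC gbar (thL m N ϑ) e v = thE m N ϑ e v) ∧
    -- `γ̄*Ω_{2,θ} = −dγ̄ + ϑ∧γ̄ = −d_ϑγ̄`
    (∀ (e : Eb m N) (v : Fin (m + 1) → Eb m N),
      pullC gbar (Omega2Th m N ϑ) e v =
        -(extDer Gbar e v) + wedge1 (thE m N ϑ) Gbar e v) ∧
    -- `γ̄*Ω_{2,θ} ≡ 0` iff `d_ϑγ̄ = 0`
    ((∀ (e : Eb m N) (v : Fin (m + 1) → Eb m N), pullC gbar (Omega2Th m N ϑ) e v = 0) ↔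
      (∀ (e : Eb m N) (v : Fin (m + 1) → Eb m N),
        extDer Gbar e v - wedge1 (thE m N ϑ) Gbar e v = 0)) := by
  have hgd : Differentiable ℝ gbar := by
    rw [show gbar = _ from funext hgbar]
    have hρd := hρ.differentiable (by simp)
    have hγd := hγ.differentiable (by simp)
    fun_prop
  have hsec : ∀ e, bundleProj m N (gbar e) = e := fun e => by rw [hgbar]; rfl
  have hDsec := fun e => apply_fderiv_of_leftInverse (bundleProj m N) hsec (hgd e)
  have hαβ : ∀ e (w : Fin m → Eb m N),
      coeffPairing m N (fun a => bundleProj m N (fderiv ℝ gbar e (w a))) = coeffPairing m N w :=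
    fun e w => by simp only [hDsec]
  have hG : coeffCoch (coeffPairing m N) ((fun q : Lb m N => q.2.2) ∘ gbar) = Gbar := by
    ext e v
    rw [hGbar, coeffCoch, Function.comp_apply, hgbar, coeffPairing_apply _ _ _ e]
  have hθ : ∀ e v, pullC gbar (thL m N ϑ) e v = thE m N ϑ e v := fun e v => by
    rw [pullC, thL_eq, hsec]
    simp only [hDsec]
  have hΘ : pullC gbar (Theta2 m N) = Gbar := by
    ext e v
    rw [Theta2_eq_coeffCoch, pullC_coeffCoch _ (hαβ e), hG]
  have hΩ : ∀ e v, pullC gbar (Omega2Th m N ϑ) e v =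
      -(extDer Gbar e v) + wedge1 (thE m N ϑ) Gbar e v := fun e v => by
    change -(pullC gbar (extDer (Theta2 m N)) e v) + pullC gbar (wedge1 _ _) e v = _
    rw [pullC_wedge1, hΘ, show pullC gbar (thL m N ϑ) = thE m N ϑ from funext₂ hθ,
      Theta2_eq_coeffCoch, pullC_extDer_coeffCoch (hgd e) (by fun_prop) (hαβ e), hG]
  refine ⟨hθ, hΩ, forall₂_congr fun e v => ?_⟩
  rw [hΩ]
  constructor <;> intro h <;> linarith

/-- Conformal pullback identity on the multimomentum bundle, in coordinates.  Let
`γ̄ = ρ d_mx + γⁱ_α du^α∧(∂_i⌟d_mx)` be a section of `Λ^m_2E → E`, i.e. the map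
`(x,u) ↦ (x, u, ρ(x,u), γⁱ_α(x,u))`, let `ϑ = ϑ_i(x)dxⁱ` be a closed 1-form on `ℝ^m`
with pullback `θ`, and `Ω_{2,θ} = −dΘ₂ + θ∧Θ₂`.  Then `γ̄*θ = ϑ` and
`γ̄*Ω_{2,θ} = −dγ̄ + ϑ∧γ̄ = −d_ϑγ̄`; consequently `γ̄*Ω_{2,θ} ≡ 0` (the image of `γ̄` is a
Lagrangian submanifold of `(Λ^m_2E, Ω_{2,θ}, θ)`) iff `d_ϑγ̄ = dγ̄ − ϑ∧γ̄ = 0`. -/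
theorem conformal_pullback_identity (m N : ℕ)
    (ϑ : (Fin m → ℝ) → Fin m → ℝ) (hϑ : ContDiff ℝ (⊤ : ℕ∞) ϑ)
    -- `ϑ` is closed
    (hϑclosed : ∀ (x : Fin m → ℝ) (i j : Fin m),
      fderiv ℝ (fun y => ϑ y i) x (Pi.single j 1) =
        fderiv ℝ (fun y => ϑ y j) x (Pi.single i 1))
    (ρ : Eb m N → ℝ) (hρ : ContDiff ℝ (⊤ : ℕ∞) ρ)
    (γ : Eb m N → Fin m → Fin N → ℝ) (hγ : ContDiff ℝ (⊤ : ℕ∞) γ)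
    -- the section `γ̄ : E → Λ^m_2E`
    (gbar : Eb m N → Lb m N) (hgbar : ∀ e : Eb m N, gbar e = (e.1, e.2, ρ e, γ e))
    -- `γ̄` as an `m`-form on `E`
    (Gbar : Coch (Eb m N) m)
    (hGbar : ∀ (e : Eb m N) (v : Fin m → Eb m N),
      Gbar e v = ρ e * dmxE m N e v +
        ∑ i : Fin m, ∑ α : Fin N, γ e i α * duContrE m N α i e v) :
    -- `γ̄*θ = ϑ`
    (∀ (e : Eb m N) (v : Fin 1 → Eb m N),
      pullC gbar (thL m N ϑ) e v = thE m N ϑ e v) ∧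
    -- `γ̄*Ω_{2,θ} = −dγ̄ + ϑ∧γ̄ = −d_ϑγ̄`
    (∀ (e : Eb m N) (v : Fin (m + 1) → Eb m N),
      pullC gbar (Omega2Th m N ϑ) e v =
        -(extDer Gbar e v) + wedge1 (thE m N ϑ) Gbar e v) ∧
    -- `γ̄*Ω_{2,θ} ≡ 0` iff `d_ϑγ̄ = 0`
    ((∀ (e : Eb m N) (v : Fin (m + 1) → Eb m N), pullC gbar (Omega2Th m N ϑ) e v = 0) ↔
      (∀ (e : Eb m N) (v : Fin (m + 1) → Eb m N),
        extDer Gbar e v - wedge1 (thE m N ϑ) Gbar e v = 0)) :=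
  conformal_pullback_identity_general m N ϑ ρ hρ γ hγ gbar hgbar Gbar hGbar
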